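/- arXiv:2602.12857 — 2 statements merged into one kernel-verified Lean document; each statement's English description precedes it below -/
import Mathlib

section
/- Let X be a ℤ₂^{n+1}-equivariant triangulation of the sphere Sⁿ in ℝ^{n+1}. Suppose there is a vertex v of X with exactly k nonzero coordinates, where 3 ≤ k ≤ n+1. Then X has at least 2^{k−1}(2^k − k − 1) missing edges. -/
open Set

noncomputable section

/-- The sign-change map `x ↦ (ε₁x₁, …, εₙxₙ)` on `EuclideanSpace ℝ (Fin n)`. -/
def signMap {n : ℕ} (ε : Fin n → ℝ) (x : EuclideanSpace ℝ (Fin n)) :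
    EuclideanSpace ℝ (Fin n) :=
  WithLp.toLp 2 (fun i => ε i * x i)

/-- `X` is a `ℤ₂ⁿ`-equivariant triangulation of the unit sphere `S^{n-1} ⊆ ℝⁿ`. -/
structure IsEquivSphereTriangulation (n : ℕ)
    (X : Geometry.SimplicialComplex ℝ (EuclideanSpace ℝ (Fin n))) : Prop where
  finite : X.faces.Finite
  zero_not_mem : (0 : EuclideanSpace ℝ (Fin n)) ∉ X.space
  radial_homeo : ∃ φ : X.space ≃ₜ (Metric.sphere (0 : EuclideanSpace ℝ (Fin n)) 1),
      ∀ x : X.space, (φ x : EuclideanSpace ℝ (Fin n)) =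
        ‖(x : EuclideanSpace ℝ (Fin n))‖⁻¹ • (x : EuclideanSpace ℝ (Fin n))
  equivariant : ∀ ε : Fin n → ℝ, (∀ i, ε i = 1 ∨ ε i = -1) →
      ∀ s ∈ X.faces, ∃ t ∈ X.faces,
        (t : Set (EuclideanSpace ℝ (Fin n))) = signMap ε '' (s : Set (EuclideanSpace ℝ (Fin n)))

/-- The missing edges of `X`: unordered pairs of distinct vertices whose segment is not a face. -/
def missingEdges {n : ℕ} (X : Geometry.SimplicialComplex ℝ (EuclideanSpace ℝ (Fin n))) :
    Set (Finset (EuclideanSpace ℝ (Fin n))) :=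
  {e | e.card = 2 ∧ ↑e ⊆ X.vertices ∧ e ∉ X.faces}

/-!
Let `S` be the support of the vertex `v`, `#S = k`. By equivariance the `2^k` sign patterns
`v_A` (negate the coordinates in `A ⊆ S`) are distinct vertices. If `A ∆ B` contains two indices
`i ≠ j`, then flipping coordinate `i` maps the segment `[v_A, v_B]` to a segment with the same
midpoint (since `v_A` and `v_B` have opposite `i`-th coordinates) whose endpoints differ from
`v_A` and `v_B` (at `i`, resp. at `j`). Two faces with disjoint vertex sets have disjoint convex
hulls, so `[v_A, v_B]` is not a face. There are `2^k (2^k - k - 1)` ordered pairs `(A, B)` with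
`#(A ∆ B) ≥ 2`, hence `2^(k-1) (2^k - k - 1)` missing edges.
-/

open Finset

namespace Geometry.SimplicialComplex

variable {𝕜 E : Type*} [AddCommGroup E]

theorem disjoint_convexHull_of_disjoint [Ring 𝕜] [PartialOrder 𝕜] [Module 𝕜 E]
    {K : SimplicialComplex 𝕜 E} {s t : Finset E} (hs : s ∈ K.faces) (ht : t ∈ K.faces)
    (hst : Disjoint s t) : Disjoint (convexHull 𝕜 (s : Set E)) (convexHull 𝕜 (t : Set E)) := by
  classical
  rw [Set.disjoint_iff_inter_eq_empty, convexHull_inter_convexHull hs ht,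
    ← Finset.coe_inter, Finset.disjoint_iff_inter_eq_empty.1 hst, Finset.coe_empty,
    convexHull_empty]

theorem add_ne_add_of_disjoint [Field 𝕜] [LinearOrder 𝕜] [IsStrictOrderedRing 𝕜] [Module 𝕜 E]
    [DecidableEq E] {K : SimplicialComplex 𝕜 E} {a b c d : E} (hab : {a, b} ∈ K.faces)
    (hcd : {c, d} ∈ K.faces) (h : Disjoint ({a, b} : Finset E) {c, d}) : a + b ≠ c + d := by
  have hmid : ∀ x y : E, (2⁻¹ : 𝕜) • (x + y) ∈ convexHull 𝕜 ((({x, y} : Finset E)) : Set E) :=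
    fun x y => by
      rw [Finset.coe_pair, convexHull_pair]
      exact ⟨2⁻¹, 2⁻¹, by norm_num, by norm_num, by norm_num, (smul_add _ _ _).symm⟩
  intro hsum
  exact Set.disjoint_left.1 (disjoint_convexHull_of_disjoint hab hcd h) (hmid a b)
    (hsum ▸ hmid c d)

end Geometry.SimplicialComplex

namespace Finset

variable {α : Type*} [DecidableEq α]

theorem card_filter_two_le_powerset (S : Finset α) :
    #{C ∈ S.powerset | 2 ≤ #C} = 2 ^ #S - #S - 1 := by
  have hsmall : #{C ∈ S.powerset | ¬2 ≤ #C} = #S + 1 := by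
    have : {C ∈ S.powerset | ¬2 ≤ #C} = S.powersetCard 0 ∪ S.powersetCard 1 := by
      ext C
      simp only [mem_filter, mem_union, mem_powersetCard, mem_powerset, ← and_or_left]
      exact and_congr_right fun _ => by omega
    rw [this, card_union_of_disjoint (pairwise_disjoint_powersetCard S zero_ne_one),
      card_powersetCard, card_powersetCard, Nat.choose_zero_right, Nat.choose_one_right, add_comm]
  have := card_filter_add_card_filter_not (s := S.powerset) (fun C => 2 ≤ #C)
  rw [hsmall, card_powerset] at this
  omega

theorem card_filter_two_le_card_symmDiff (S : Finset α) :
    #{p ∈ S.powerset ×ˢ S.powerset | 2 ≤ #(symmDiff p.1 p.2)} = 2 ^ #S * (2 ^ #S - #S - 1) := by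
  have hfiber : ∀ A ∈ S.powerset, #{B ∈ S.powerset | 2 ≤ #(symmDiff A B)} = 2 ^ #S - #S - 1 := by
    intro A hA
    have hAS : ∀ {B}, B ⊆ S → symmDiff A B ⊆ S := fun hB =>
      symmDiff_subset_union.trans (union_subset (mem_powerset.1 hA) hB)
    rw [← card_filter_two_le_powerset]
    refine card_nbij' (symmDiff A) (symmDiff A) ?_ ?_ ?_ ?_ <;> intro B hB <;>
      simp_all [symmDiff_symmDiff_cancel_left]
  rw [card_filter, sum_product, ← card_powerset S, ← smul_eq_mul, ← sum_const]
  exact sum_congr rfl fun A hA => by rw [← card_filter, hfiber A hA, card_powerset]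

theorem card_le_two_mul_card_image_pair {β : Type*} [DecidableEq β] {f : α → β} {s : Set α}
    (hf : Set.InjOn f s) (Q : Finset (α × α)) (hQ : ∀ p ∈ Q, p.1 ∈ s ∧ p.2 ∈ s) :
    #Q ≤ 2 * #(Q.image fun p => ({f p.1, f p.2} : Finset β)) := by
  refine card_le_mul_card_image Q 2 fun e he => ?_
  obtain ⟨⟨a, b⟩, hab, rfl⟩ := mem_image.1 he
  calc #{p ∈ Q | {f p.1, f p.2} = ({f a, f b} : Finset β)} ≤ #{(a, b), (b, a)} := by
        refine card_le_card fun ⟨c, d⟩ hcd => ?_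
        obtain ⟨hcdQ, hcd⟩ := mem_filter.1 hcd
        have := congrArg (fun t : Finset β => (t : Set β)) hcd
        simp only [coe_insert, coe_singleton, Set.pair_eq_pair_iff] at this
        obtain ⟨ha, hb⟩ := hQ _ hab
        obtain ⟨hc, hd⟩ := hQ _ hcdQ
        simp only [mem_insert, mem_singleton, Prod.mk.injEq]
        rcases this with ⟨h1, h2⟩ | ⟨h1, h2⟩
        · exact .inl ⟨hf hc ha h1, hf hd hb h2⟩
        · exact .inr ⟨hf hc hb h1, hf hd ha h2⟩
    _ ≤ 2 := card_le_two

end Finset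

section SignInvariant

variable {m : ℕ}

def coordFlip (A : Finset (Fin m)) : EuclideanSpace ℝ (Fin m) → EuclideanSpace ℝ (Fin m) :=
  signMap fun i => if i ∈ A then -1 else 1

theorem coordFlip_apply (A : Finset (Fin m)) (x : EuclideanSpace ℝ (Fin m)) (i : Fin m) :
    coordFlip A x i = if i ∈ A then -x i else x i := by
  simp only [coordFlip, signMap]
  split_ifs <;> simp

theorem coordFlip_apply_of_mem_symmDiff {A B : Finset (Fin m)} {i : Fin m}
    (hi : i ∈ symmDiff A B) (x : EuclideanSpace ℝ (Fin m)) :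
    coordFlip A x i = -coordFlip B x i := by
  rcases Finset.mem_symmDiff.1 hi with ⟨hA, hB⟩ | ⟨hB, hA⟩ <;> simp [coordFlip_apply, hA, hB]

theorem coordFlip_apply_ne_zero (A : Finset (Fin m)) {x : EuclideanSpace ℝ (Fin m)} {i : Fin m}
    (hx : x i ≠ 0) : coordFlip A x i ≠ 0 := by
  rw [coordFlip_apply]
  split_ifs <;> simpa

def coordSupport (x : EuclideanSpace ℝ (Fin m)) : Finset (Fin m) := {i | x i ≠ 0}

theorem card_coordSupport (x : EuclideanSpace ℝ (Fin m)) :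
    (coordSupport x).card = {i | x i ≠ 0}.ncard := by
  rw [← Set.ncard_coe_finset]
  simp [coordSupport]

theorem injOn_coordFlip (x : EuclideanSpace ℝ (Fin m)) :
    Set.InjOn (coordFlip · x) (coordSupport x).powerset := by
  intro A hA B hB hAB
  by_contra hne
  obtain ⟨i, hi⟩ := Finset.symmDiff_nonempty.2 hne
  have hxi : x i ≠ 0 := by
    have := Finset.symmDiff_subset_union.trans
      (Finset.union_subset (Finset.mem_powerset.1 hA) (Finset.mem_powerset.1 hB)) hi
    simpa [coordSupport] using this
  have hflip := coordFlip_apply_of_mem_symmDiff hi x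
  rw [show coordFlip A x = coordFlip B x from hAB] at hflip
  exact coordFlip_apply_ne_zero B hxi (self_eq_neg.1 hflip)

def IsSignInvariant (X : Geometry.SimplicialComplex ℝ (EuclideanSpace ℝ (Fin m))) : Prop :=
  ∀ A : Finset (Fin m), ∀ s ∈ X.faces, s.image (coordFlip A) ∈ X.faces

theorem IsEquivSphereTriangulation.isSignInvariant
    {X : Geometry.SimplicialComplex ℝ (EuclideanSpace ℝ (Fin m))}
    (hX : IsEquivSphereTriangulation m X) : IsSignInvariant X := by
  intro A s hs
  obtain ⟨t, ht, hts⟩ :=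
    hX.equivariant (fun i => if i ∈ A then -1 else 1) (fun i => by split_ifs <;> simp) s hs
  rwa [show s.image (coordFlip A) = t from Finset.coe_injective (by rw [Finset.coe_image, hts]; rfl)]

namespace IsSignInvariant

variable {X : Geometry.SimplicialComplex ℝ (EuclideanSpace ℝ (Fin m))} (hX : IsSignInvariant X)
include hX

theorem coordFlip_mem_vertices (A : Finset (Fin m)) {v : EuclideanSpace ℝ (Fin m)}
    (hv : v ∈ X.vertices) : coordFlip A v ∈ X.vertices := by
  simpa [Geometry.SimplicialComplex.mem_vertices] using hX A {v} hv

theorem pair_notMem_faces {a b : EuclideanSpace ℝ (Fin m)} {i j : Fin m} (hji : j ≠ i)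
    (hi : a i = -b i) (hai : a i ≠ 0) (hj : a j ≠ b j) : {a, b} ∉ X.faces := by
  intro hab
  have hflip := hX {i} _ hab
  rw [Finset.image_insert, Finset.image_singleton] at hflip
  have hsum : a + b = coordFlip {i} a + coordFlip {i} b := by
    ext l
    by_cases hl : l = i
    · subst hl
      simp [coordFlip_apply, hi]
    · simp [coordFlip_apply, hl]
  refine Geometry.SimplicialComplex.add_ne_add_of_disjoint hab hflip ?_ hsum
  have hcoord : ∀ {x y : EuclideanSpace ℝ (Fin m)} (l : Fin m), x l ≠ y l → x ≠ y :=
    fun l h hxy => h (hxy ▸ rfl)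
  simp only [Finset.disjoint_insert_left, Finset.disjoint_insert_right,
    Finset.disjoint_singleton_left, Finset.mem_insert, Finset.mem_singleton, not_or]
  refine ⟨⟨hcoord i ?_, hcoord j ?_⟩, hcoord j ?_, hcoord i ?_⟩ <;>
    simp only [coordFlip_apply, Finset.mem_singleton, hji, if_true, if_false]
  all_goals first | exact hj | exact fun h => hai (by linarith)

theorem pair_coordFlip_mem_missingEdges {v : EuclideanSpace ℝ (Fin m)} (hv : v ∈ X.vertices)
    {A B : Finset (Fin m)} (hA : A ⊆ coordSupport v) (hB : B ⊆ coordSupport v)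
    (hAB : 2 ≤ #(symmDiff A B)) : {coordFlip A v, coordFlip B v} ∈ missingEdges X := by
  obtain ⟨i, hi, j, hj, hij⟩ := Finset.one_lt_card.1 hAB
  have hsupp : ∀ l ∈ symmDiff A B, coordFlip A v l ≠ 0 := fun l hl =>
    coordFlip_apply_ne_zero A (by simpa [coordSupport] using
      Finset.symmDiff_subset_union.trans (Finset.union_subset hA hB) hl)
  have hne : coordFlip A v ≠ coordFlip B v := fun h =>
    hsupp i hi (self_eq_neg.1 (h ▸ coordFlip_apply_of_mem_symmDiff hi v))
  refine ⟨Finset.card_pair hne, ?_, ?_⟩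
  · simp only [Finset.coe_insert, Finset.coe_singleton, Set.insert_subset_iff,
      Set.singleton_subset_iff]
    exact ⟨hX.coordFlip_mem_vertices A hv, hX.coordFlip_mem_vertices B hv⟩
  · refine hX.pair_notMem_faces (Ne.symm hij) (coordFlip_apply_of_mem_symmDiff hi v) (hsupp i hi)
      fun h => hsupp j hj ?_
    have := coordFlip_apply_of_mem_symmDiff hj v
    linarith

end IsSignInvariant

theorem missingEdges_finite {X : Geometry.SimplicialComplex ℝ (EuclideanSpace ℝ (Fin m))}
    (hX : X.faces.Finite) : (missingEdges X).Finite :=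
  have hV : X.vertices.Finite := hX.preimage Finset.singleton_injective.injOn
  (hV.finite_subsets.preimage Finset.coe_injective.injOn).subset fun _ he => he.2.1

end SignInvariant

theorem stmt1_general (n k : ℕ)
    (X : Geometry.SimplicialComplex ℝ (EuclideanSpace ℝ (Fin (n + 1))))
    (hX : IsEquivSphereTriangulation (n + 1) X)
    (v : EuclideanSpace ℝ (Fin (n + 1))) (hv : v ∈ X.vertices)
    (hsupp : {i : Fin (n + 1) | v i ≠ 0}.ncard = k) :
    2 ^ (k - 1) * (2 ^ k - k - 1) ≤ (missingEdges X).ncard := by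
  set S := coordSupport v
  have hS : #S = k := (card_coordSupport v).trans hsupp
  set Q := {p ∈ S.powerset ×ˢ S.powerset | 2 ≤ #(symmDiff p.1 p.2)}
  have hQ : ∀ p ∈ Q, p.1 ∈ (S.powerset : Set _) ∧ p.2 ∈ (S.powerset : Set _) := fun p hp => by
    simp_all [Q]
  have hedges : ↑(Q.image fun p => ({coordFlip p.1 v, coordFlip p.2 v} : Finset _)) ⊆
      missingEdges X := by
    intro e he
    obtain ⟨⟨A, B⟩, hABQ, rfl⟩ := Finset.mem_image.1 he
    simp only [Q, Finset.mem_filter, Finset.mem_product, Finset.mem_powerset] at hABQ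
    exact hX.isSignInvariant.pair_coordFlip_mem_missingEdges hv hABQ.1.1 hABQ.1.2 hABQ.2
  have hQcard : 2 * (2 ^ (k - 1) * (2 ^ k - k - 1)) ≤ #Q := by
    rw [Finset.card_filter_two_le_card_symmDiff, hS]
    rcases k with _ | k
    · simp
    · rw [Nat.add_sub_cancel, pow_succ', mul_assoc]
  have hfibers := Finset.card_le_two_mul_card_image_pair (injOn_coordFlip v) Q hQ
  have hsub := Set.ncard_le_ncard hedges (missingEdges_finite hX.finite)
  rw [Set.ncard_coe_finset] at hsub
  omega

theorem stmt1 (n k : ℕ)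
    (X : Geometry.SimplicialComplex ℝ (EuclideanSpace ℝ (Fin (n + 1))))
    (hX : IsEquivSphereTriangulation (n + 1) X)
    (v : EuclideanSpace ℝ (Fin (n + 1))) (hv : v ∈ X.vertices)
    (hk3 : 3 ≤ k) (hkn : k ≤ n + 1)
    (hsupp : {i : Fin (n + 1) | v i ≠ 0}.ncard = k) :
    2 ^ (k - 1) * (2 ^ k - k - 1) ≤ (missingEdges X).ncard :=
  stmt1_general n k X hX v hv hsupp
end
end

section
/- Fix n ≥ 2. There is no ℤ₂^{n+1}-equivariant triangulation X of the sphere Sⁿ in ℝ^{n+1} such that X has exactly 2^{n+1} vertices and some vertex (x₁, …, x_{n+1}) of X has all of x₁, …, x_{n+1} nonzero. -/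
open Set

noncomputable section

/-!
The sign orbit of the vertex `v` has `2 ^ (n + 1)` points, so it is the whole vertex set and every
vertex has all coordinates nonzero. Let `S` be the smallest face containing the point of `|X|` on
the first coordinate axis. A sign change fixing the first coordinate fixes that point, so it maps
`S` onto a face containing it, hence onto `S` itself. For a vertex `w` of `S` and the sign changes
`σ`, `τ` of two other coordinates, the distinct vertices `w`, `σ w`, `τ w`, `σ (τ w)` of `S`
satisfy `w + σ (τ w) = σ w + τ w`, contradicting affine independence.
-/

open Function

section signMap

variable {m : ℕ}

def IsSignVector (ε : Fin m → ℝ) : Prop :=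
  ∀ i, ε i = 1 ∨ ε i = -1

lemma IsSignVector.ne_zero {ε : Fin m → ℝ} (hε : IsSignVector ε) (i : Fin m) : ε i ≠ 0 := by
  rcases hε i with h | h <;> simp [h]

lemma isSignVector_mulSingle (i : Fin m) : IsSignVector (Pi.mulSingle i (-1)) := by
  intro j
  rcases eq_or_ne j i with rfl | h <;> simp [*]

lemma isSignVector_units (ε : Fin m → ℤˣ) : IsSignVector fun i => ((ε i : ℤ) : ℝ) := by
  intro i
  rcases Int.units_eq_one_or (ε i) with h | h <;> simp [h]

@[simp]
lemma signMap_apply (ε : Fin m → ℝ) (x : EuclideanSpace ℝ (Fin m)) (i : Fin m) :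
    signMap ε x i = ε i * x i :=
  rfl

lemma isLinearMap_signMap (ε : Fin m → ℝ) : IsLinearMap ℝ (signMap ε) where
  map_add x y := by ext i; simp [mul_add]
  map_smul c x := by ext i; simp [mul_left_comm]

lemma signMap_injective {ε : Fin m → ℝ} (hε : ∀ i, ε i ≠ 0) : Injective (signMap ε) :=
  fun x y h => PiLp.ext fun i => mul_left_cancel₀ (hε i) (by simpa using congrArg (· i) h)

lemma signMap_mulSingle_of_apply_eq_zero {x : EuclideanSpace ℝ (Fin m)} {i : Fin m}
    (hx : x i = 0) : signMap (Pi.mulSingle i (-1)) x = x := by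
  ext j
  rcases eq_or_ne j i with rfl | h <;> simp [*]

end signMap

theorem AffineIndependent.add_ne_add {k V ι : Type*} [Ring k] [Nontrivial k] [AddCommGroup V]
    [Module k V] {p : ι → V} (hp : AffineIndependent k p) {i j l m : ι}
    (hi : i ∉ ({j, l, m} : Set ι)) : p i + p j ≠ p l + p m := by
  intro h
  have hspan : p i ∈ affineSpan k (p '' {j, l, m}) := by
    have hpi : p i = (p l -ᵥ p j) +ᵥ p m := by
      rw [vsub_eq_sub, vadd_eq_add, sub_add_eq_add_sub, ← h, add_sub_cancel_right]
    rw [hpi]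
    refine AffineSubspace.vadd_mem_of_mem_direction ?_ (mem_affineSpan k (by simp))
    rw [direction_affineSpan]
    exact vsub_mem_vectorSpan k (by simp) (by simp)
  exact hi ((hp.mem_affineSpan_iff i _).1 hspan)

namespace Geometry.SimplicialComplex

variable {𝕜 E : Type*} [Ring 𝕜] [PartialOrder 𝕜] [AddCommGroup E] [Module 𝕜 E]
  {K : SimplicialComplex 𝕜 E}

lemma vertices_finite (hK : K.faces.Finite) : K.vertices.Finite :=
  hK.preimage fun _ _ _ _ h => Finset.singleton_injective h

lemma exists_minimal_face {x : E} (hx : x ∈ K.space) :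
    ∃ s ∈ K.faces, x ∈ convexHull 𝕜 (s : Set E) ∧
      ∀ t ∈ K.faces, x ∈ convexHull 𝕜 (t : Set E) → s ⊆ t := by
  classical
  obtain ⟨s, ⟨hs, hxs⟩, hmin⟩ := (InvImage.wf Finset.card wellFounded_lt).has_min
    {s | s ∈ K.faces ∧ x ∈ convexHull 𝕜 (s : Set E)} (mem_space_iff.1 hx)
  refine ⟨s, hs, hxs, fun t ht hxt => ?_⟩
  have hx_inter : x ∈ convexHull 𝕜 ((s ∩ t : Finset E) : Set E) := by
    rw [Finset.coe_inter]
    exact K.inter_subset_convexHull hs ht ⟨hxs, hxt⟩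
  have hne : (s ∩ t).Nonempty := by
    rw [← Finset.coe_nonempty]
    exact (convexHull_nonempty_iff (𝕜 := 𝕜)).1 ⟨x, hx_inter⟩
  have hface := K.down_closed hs Finset.inter_subset_left hne
  have hcard : s.card ≤ (s ∩ t).card := not_lt.1 (hmin _ ⟨hface, hx_inter⟩)
  rw [← Finset.inter_eq_left]
  exact Finset.eq_of_subset_of_card_le Finset.inter_subset_left hcard

lemma eq_of_coe_eq_image {s t : Finset E} {x : E} {f : E → E} (hf : IsLinearMap 𝕜 f)
    (hf_inj : Injective f) (hfx : f x = x) (hxs : x ∈ convexHull 𝕜 (s : Set E))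
    (hmin : ∀ t ∈ K.faces, x ∈ convexHull 𝕜 (t : Set E) → s ⊆ t) (ht : t ∈ K.faces)
    (hts : (t : Set E) = f '' s) : t = s := by
  have hst : s ⊆ t := hmin t ht (by
    rw [hts, ← hf.image_convexHull]
    exact ⟨x, hxs, hfx⟩)
  have hcard : t.card = s.card := by
    rw [← Set.ncard_coe_finset, hts, Set.ncard_image_of_injective _ hf_inj, Set.ncard_coe_finset]
  exact (Finset.eq_of_subset_of_card_le hst hcard.le).symm

end Geometry.SimplicialComplex

lemma not_affineIndependent_of_mulSingle_mem {m : ℕ} {S : Finset (EuclideanSpace ℝ (Fin m))}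
    {i j : Fin m} (hij : i ≠ j)
    (hi : ∀ x ∈ S, signMap (Pi.mulSingle i (-1)) x ∈ S)
    (hj : ∀ x ∈ S, signMap (Pi.mulSingle j (-1)) x ∈ S)
    {x : EuclideanSpace ℝ (Fin m)} (hx : x ∈ S) (hxi : x i ≠ 0) (hxj : x j ≠ 0) :
    ¬ AffineIndependent ℝ ((↑) : S → EuclideanSpace ℝ (Fin m)) := by
  set σ := signMap (Pi.mulSingle i (-1))
  set τ := signMap (Pi.mulSingle j (-1))
  intro hS
  refine hS.add_ne_add (i := ⟨σ (τ x), hi _ (hj x hx)⟩) (j := ⟨x, hx⟩) (l := ⟨σ x, hi x hx⟩)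
    (m := ⟨τ x, hj x hx⟩) ?_ ?_
  · simp only [Set.mem_insert_iff, Set.mem_singleton_iff, Subtype.mk.injEq, not_or]
    refine ⟨fun h => hxi ?_, fun h => hxj ?_, fun h => hxi ?_⟩
    · have := congrArg (· i) h
      simp [σ, τ, hij] at this
      linarith
    · have := congrArg (· j) h
      simp [σ, τ, hij.symm] at this
      linarith
    · have := congrArg (· i) h
      simp [σ, τ, hij] at this
      linarith
  · ext k
    rcases eq_or_ne k i with rfl | hki
    · simp [σ, τ, hij]
    · rcases eq_or_ne k j with rfl | hkj <;> simp [σ, τ, *]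

lemma forall_apply_ne_zero_of_ncard_eq {m : ℕ} {V : Set (EuclideanSpace ℝ (Fin m))}
    (hV : V.Finite) (hcard : V.ncard = 2 ^ m)
    (hinv : ∀ ε, IsSignVector ε → ∀ x ∈ V, signMap ε x ∈ V)
    {v : EuclideanSpace ℝ (Fin m)} (hv : v ∈ V) (hv0 : ∀ i, v i ≠ 0)
    {x : EuclideanSpace ℝ (Fin m)} (hx : x ∈ V) (i : Fin m) : x i ≠ 0 := by
  set orbit : (Fin m → ℤˣ) → EuclideanSpace ℝ (Fin m) := fun ε =>
    signMap (fun i => ((ε i : ℤ) : ℝ)) v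
  have horbit_inj : Injective orbit := fun ε ε' h =>
    funext fun i => Units.ext <| Int.cast_injective <|
      mul_right_cancel₀ (hv0 i) (by simpa [orbit] using congrArg (· i) h)
  have horbit_card : (range orbit).ncard = 2 ^ m := by
    rw [← image_univ, ncard_image_of_injective _ horbit_inj, ncard_univ, Nat.card_eq_fintype_card,
      Fintype.card_fun, Fintype.card_units_int, Fintype.card_fin]
  have horbit_sub : range orbit ⊆ V :=
    range_subset_iff.2 fun ε => hinv _ (isSignVector_units ε) v hv
  obtain ⟨ε, rfl⟩ : x ∈ range orbit := by
    rwa [eq_of_subset_of_ncard_le horbit_sub (hcard.trans horbit_card.symm).le hV]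
  simpa [orbit] using hv0 i

namespace IsEquivSphereTriangulation

variable {m : ℕ} {X : Geometry.SimplicialComplex ℝ (EuclideanSpace ℝ (Fin m))}

lemma signMap_mem_vertices (hX : IsEquivSphereTriangulation m X) {ε : Fin m → ℝ}
    (hε : IsSignVector ε) {x : EuclideanSpace ℝ (Fin m)} (hx : x ∈ X.vertices) :
    signMap ε x ∈ X.vertices := by
  obtain ⟨t, ht, hts⟩ := hX.equivariant ε hε {x} hx
  rw [Finset.coe_singleton, image_singleton, Finset.coe_eq_singleton] at hts
  rwa [Geometry.SimplicialComplex.mem_vertices, ← hts]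

lemma exists_mem_space_forall_ne_eq_zero (hX : IsEquivSphereTriangulation m X) (i : Fin m) :
    ∃ p ∈ X.space, ∀ j ≠ i, p j = 0 := by
  obtain ⟨φ, hφ⟩ := hX.radial_homeo
  obtain ⟨p, hp⟩ := φ.surjective ⟨EuclideanSpace.single i 1, by simp⟩
  refine ⟨p, p.2, fun j hj => ?_⟩
  have h := congrArg (· j) (hφ p)
  rw [hp] at h
  simp [hj] at h
  rcases h with h | h <;> simp [h]

lemma signMap_mem_of_minimal (hX : IsEquivSphereTriangulation m X)
    {S : Finset (EuclideanSpace ℝ (Fin m))} (hS : S ∈ X.faces) {p : EuclideanSpace ℝ (Fin m)}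
    (hpS : p ∈ convexHull ℝ (S : Set (EuclideanSpace ℝ (Fin m))))
    (hmin : ∀ t ∈ X.faces, p ∈ convexHull ℝ (t : Set (EuclideanSpace ℝ (Fin m))) → S ⊆ t)
    {ε : Fin m → ℝ} (hε : IsSignVector ε) (hεp : signMap ε p = p)
    {x : EuclideanSpace ℝ (Fin m)} (hx : x ∈ S) : signMap ε x ∈ S := by
  obtain ⟨t, ht, hts⟩ := hX.equivariant ε hε S hS
  have hteq := X.eq_of_coe_eq_image (isLinearMap_signMap ε) (signMap_injective hε.ne_zero) hεp
    hpS hmin ht hts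
  rw [← hteq, ← Finset.mem_coe, hts]
  exact mem_image_of_mem _ hx

end IsEquivSphereTriangulation

theorem stmt2 (n : ℕ) (hn : 2 ≤ n) :
    ¬ ∃ X : Geometry.SimplicialComplex ℝ (EuclideanSpace ℝ (Fin (n + 1))),
      IsEquivSphereTriangulation (n + 1) X ∧ X.vertices.ncard = 2 ^ (n + 1) ∧
      ∃ v ∈ X.vertices, ∀ i : Fin (n + 1), v i ≠ 0 := by
  rintro ⟨X, hX, hcard, v, hv, hv0⟩
  have hvertex : ∀ x ∈ X.vertices, ∀ i, x i ≠ 0 := fun x hx =>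
    forall_apply_ne_zero_of_ncard_eq (X.vertices_finite hX.finite) hcard
      (fun _ hε _ => hX.signMap_mem_vertices hε) hv hv0 hx
  obtain ⟨p, hp, hp0⟩ := hX.exists_mem_space_forall_ne_eq_zero 0
  obtain ⟨S, hS, hpS, hmin⟩ := X.exists_minimal_face hp
  have hflip : ∀ i ≠ 0, ∀ x ∈ S, signMap (Pi.mulSingle i (-1)) x ∈ S := fun i hi _ =>
    hX.signMap_mem_of_minimal hS hpS hmin (isSignVector_mulSingle i)
      (signMap_mulSingle_of_apply_eq_zero (hp0 i hi))
  obtain ⟨w, hw⟩ := X.nonempty_of_mem_faces hS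
  have hw_vertex : w ∈ X.vertices :=
    X.down_closed hS (Finset.singleton_subset_iff.2 hw) (Finset.singleton_nonempty w)
  let i₁ : Fin (n + 1) := ⟨1, by omega⟩
  let i₂ : Fin (n + 1) := ⟨2, by omega⟩
  exact not_affineIndependent_of_mulSingle_mem (i := i₁) (j := i₂) (by simp [i₁, i₂, Fin.ext_iff])
    (hflip i₁ (by simp [i₁, Fin.ext_iff])) (hflip i₂ (by simp [i₂, Fin.ext_iff])) hw
    (hvertex w hw_vertex i₁) (hvertex w hw_vertex i₂) (X.indep hS)
end
end
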